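/- Let (A, R) be a Rota–Baxter algebra of weight 1 over a field K of characteristic zero, regard A as a Lie algebra under the commutator [x, y] = xy − yx, let U(A) be its universal enveloping algebra with canonical embedding ι : A → U(A), and for x ∈ A define the Grossman–Larson powers x^{∗0} := 1 and x^{∗(n+1)} := ι(x)·x^{∗n} + ι(R(x))·x^{∗n} − x^{∗n}·ι(R(x)) in U(A). Then in the formal power series ring U(A)⟦t⟧, the n-th formal derivative with respect to t of the product exp(−t·ι(R̃(x)))·exp(−t·ι(R(x))) equals exp(−t·ι(R̃(x)))·x^{∗n}·exp(−t·ι(R(x))) for every n ≥ 0, where R̃ := −id_A − R (so that −R̃(x) = x + R(x)) and exp(−t·ι(R̃(x))) := Σ_{n≥0} tⁿ·ι(x + R(x))ⁿ/n!, exp(−t·ι(R(x))) := Σ_{n≥0} tⁿ·(−ι(R(x)))ⁿ/n!. -/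

import Mathlib

attribute [local instance 100] LieRing.ofAssociativeRing

/-- Regard the ring `A` as a Lie algebra under the commutator; `ι` is the canonical embedding
into the universal enveloping algebra. -/
noncomputable abbrev ueι (K : Type*) {A : Type*} [Field K] [Ring A] [Algebra K A] :
    A →ₗ⁅K⁆ UniversalEnvelopingAlgebra K A :=
  UniversalEnvelopingAlgebra.ι K

/-- The `n`-th Grossman–Larson power `x^{∗n}` of `x ∈ A` in `U(A)`, for the post-Lie structure
`x ▷ y = [R x, y]` of a weight-one Rota–Baxter algebra `(A, R)`:
`x^{∗0} = 1`, `x^{∗(n+1)} = x ∗ x^{∗n} = ι x · x^{∗n} + ι (R x) · x^{∗n} - x^{∗n} · ι (R x)`. -/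
noncomputable def glPow {K A : Type*} [Field K] [CharZero K] [Ring A] [Algebra K A]
    (R : A →ₗ[K] A) (x : A) : ℕ → UniversalEnvelopingAlgebra K A
  | 0 => 1
  | n + 1 =>
      ueι K x * glPow R x n + ueι K (R x) * glPow R x n - glPow R x n * ueι K (R x)

/-- The formal derivative `d/dt` on `S⟦t⟧` (coefficientwise, valid over a noncommutative
ring). -/
noncomputable def psDeriv {S : Type*} [Ring S] (f : PowerSeries S) : PowerSeries S :=
  PowerSeries.mk fun n => (n + 1 : ℕ) • PowerSeries.coeff (R := S) (n + 1) f

/-- The power series `exp(t·u) = Σ_{n≥0} tⁿ·uⁿ/n!` in `S⟦t⟧`, for `u` in a `K`-algebra `S`. -/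
noncomputable def expSeries (K : Type*) {S : Type*} [Field K] [CharZero K] [Ring S]
    [Algebra K S] (u : S) : PowerSeries S :=
  PowerSeries.mk fun n => ((n.factorial : K)⁻¹) • u ^ n

/-!
Both sides are of the form `exp(t a) · C g · exp(t b)` with `a = ι(x + R x)` and `b = -ι(R x)`.
By the Leibniz rule and `d/dt exp(t u) = exp(t u) · u = u · exp(t u)`, differentiating such a
product replaces `g` by `a g + g b`, and the Grossman–Larson recursion says precisely that
`x^{∗(n+1)} = a · x^{∗n} + x^{∗n} · b`.
-/

open PowerSeries

section PowerSeries

variable {S : Type*} [Ring S]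

lemma psDeriv_mul (f g : S⟦X⟧) : psDeriv (f * g) = psDeriv f * g + f * psDeriv g := by
  ext n
  simp only [psDeriv, coeff_mk, map_add, coeff_mul, Finset.smul_sum]
  have hsplit : ∀ p ∈ Finset.HasAntidiagonal.antidiagonal (n + 1),
      (n + 1) • (coeff p.1 f * coeff p.2 g) =
        p.1 • (coeff p.1 f * coeff p.2 g) + p.2 • (coeff p.1 f * coeff p.2 g) := by
    intro p hp
    rw [← add_nsmul, Finset.HasAntidiagonal.mem_antidiagonal.mp hp]
  rw [Finset.sum_congr rfl hsplit, Finset.sum_add_distrib, Finset.Nat.sum_antidiagonal_succ,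
    Finset.Nat.sum_antidiagonal_succ']
  simp only [zero_smul, zero_add, smul_mul_assoc, mul_smul_comm]

lemma psDeriv_C (s : S) : psDeriv (C s) = 0 := by
  ext n
  simp [psDeriv]

variable {K : Type*} [Field K] [CharZero K] [Algebra K S]

lemma commute_C_expSeries (u : S) : Commute (C u) (expSeries K u) := by
  ext n
  simp only [expSeries, coeff_mul_C, coeff_C_mul, coeff_mk, smul_mul_assoc, mul_smul_comm,
    ← pow_succ, ← pow_succ']

lemma psDeriv_expSeries (u : S) : psDeriv (expSeries K u) = expSeries K u * C u := by
  ext n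
  simp only [psDeriv, expSeries, coeff_mk, coeff_mul_C, smul_mul_assoc, ← pow_succ]
  rw [← Nat.cast_smul_eq_nsmul K, smul_smul, Nat.factorial_succ, Nat.cast_mul,
    mul_inv, ← mul_assoc, mul_inv_cancel₀ (Nat.cast_ne_zero.mpr n.succ_ne_zero), one_mul]

lemma psDeriv_expSeries_mul_C_mul_expSeries (a b g : S) :
    psDeriv (expSeries K a * C g * expSeries K b) =
      expSeries K a * C (a * g + g * b) * expSeries K b := by
  rw [psDeriv_mul, psDeriv_mul, psDeriv_C, psDeriv_expSeries, psDeriv_expSeries,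
    ← (commute_C_expSeries b).eq, map_add, map_mul, map_mul]
  noncomm_ring

lemma iterate_psDeriv_expSeries_mul_expSeries (a b : S) (g : ℕ → S) (h0 : g 0 = 1)
    (hsucc : ∀ n, g (n + 1) = a * g n + g n * b) (n : ℕ) :
    psDeriv^[n] (expSeries K a * expSeries K b) = expSeries K a * C (g n) * expSeries K b := by
  induction n with
  | zero => simp [h0]
  | succ n ih =>
    rw [Function.iterate_succ_apply', ih, psDeriv_expSeries_mul_C_mul_expSeries, hsucc]

end PowerSeries

lemma glPow_succ {K A : Type*} [Field K] [CharZero K] [Ring A] [Algebra K A]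
    (R : A →ₗ[K] A) (x : A) (n : ℕ) :
    glPow R x (n + 1) = ueι K (x + R x) * glPow R x n + glPow R x n * -ueι K (R x) := by
  rw [glPow, map_add]
  noncomm_ring

theorem deriv_of_exp_product_eq_gl_power_general {K A : Type*} [Field K] [CharZero K]
    [Ring A] [Algebra K A] (R : A →ₗ[K] A) (x : A) :
    ∀ n : ℕ,
      psDeriv^[n] (expSeries K (ueι K (x + R x)) * expSeries K (-(ueι K (R x)))) =
        expSeries K (ueι K (x + R x)) *
          PowerSeries.C (R := UniversalEnvelopingAlgebra K A) (glPow R x n) *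
          expSeries K (-(ueι K (R x))) :=
  iterate_psDeriv_expSeries_mul_expSeries _ _ (glPow R x) rfl (glPow_succ R x)

/-- For a Rota–Baxter algebra `(A, R)` of weight `1` over a field `K` of
characteristic zero, with `R̃ := -id - R` (so `-R̃ x = x + R x`), the `n`-th formal derivative
of `exp(-t·ι(R̃ x)) · exp(-t·ι(R x))` in `U(A)⟦t⟧` equals
`exp(-t·ι(R̃ x)) · x^{∗n} · exp(-t·ι(R x))`, where `x^{∗n}` is the `n`-th Grossman–Larson
power of `x`. -/
theorem deriv_of_exp_product_eq_gl_power {K A : Type*} [Field K] [CharZero K]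
    [Ring A] [Algebra K A] (R : A →ₗ[K] A)
    (hRB : ∀ x y : A, R x * R y = R (R x * y + x * R y + x * y)) (x : A) :
    ∀ n : ℕ,
      psDeriv^[n] (expSeries K (ueι K (x + R x)) * expSeries K (-(ueι K (R x)))) =
        expSeries K (ueι K (x + R x)) *
          PowerSeries.C (R := UniversalEnvelopingAlgebra K A) (glPow R x n) *
          expSeries K (-(ueι K (R x))) :=
  deriv_of_exp_product_eq_gl_power_general R x
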